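/- Let I be a finite index set, X a type, x : I → X a fixed assignment of data points, and p⁺, p⁻ : X → ℝ functions with p⁻(x_i) > 0 and p⁺(x_i) > 0 for every i ∈ I. Let P ⊆ I be a subset with |P| = T − 1 where 2 ≤ T < |I|, and for S ∈ I \ P define the weight w(S) = p⁺(x_S) · ∏_{p ∈ P} p⁺(x_p) · ∏_{n ∈ I \ (P ∪ {S})} p⁻(x_n). Define the ratio r(x) = p⁺(x)/p⁻(x). Then for every S ∈ I \ P, w(S) / Σ_{S' ∈ I \ P} w(S') = r(x_S) / Σ_{i ∈ I \ P} r(x_i). -/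
import Mathlib


open Finset

/-- For the supervised noise-contrastive model, the conditional probability
that `S ∈ I \ P` is the final target index equals the density-ratio softmax form. -/
theorem supervised_posterior_eq_ratio_form
    {ι : Type*} [Fintype ι] [DecidableEq ι]
    {X : Type*} (x : ι → X) (ppos pneg : X → ℝ)
    (hpos : ∀ i : ι, 0 < ppos (x i)) (hneg : ∀ i : ι, 0 < pneg (x i))
    (T : ℕ) (hT1 : 2 ≤ T) (hT2 : T < Fintype.card ι)
    (P : Finset ι) (hP : P.card = T - 1)
    (w : ι → ℝ)
    (hw : ∀ S : ι,
      w S = ppos (x S) * (∏ p ∈ P, ppos (x p)) * ∏ n ∈ univ \ insert S P, pneg (x n))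
    (r : X → ℝ) (hr : ∀ x', r x' = ppos x' / pneg x')
    (S : ι) (hS : S ∈ univ \ P) :
    w S / (∑ S' ∈ univ \ P, w S')
      = r (x S) / (∑ i ∈ univ \ P, r (x i)) := by
  set c : ℝ := (∏ p ∈ P, ppos (x p)) * ∏ n ∈ univ \ P, pneg (x n) with hc
  have hcpos : 0 < c :=
    mul_pos (Finset.prod_pos fun i _ => hpos i) (Finset.prod_pos fun i _ => hneg i)
  have key : ∀ S' ∈ univ \ P, w S' = r (x S') * c := by
    intro S' hS'
    have hS'P : S' ∉ P := (Finset.mem_sdiff.mp hS').2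
    have hmem : S' ∈ univ \ P := hS'
    have hsplit : (∏ n ∈ univ \ P, pneg (x n))
        = pneg (x S') * ∏ n ∈ (univ \ P).erase S', pneg (x n) :=
      (Finset.mul_prod_erase _ _ hmem).symm
    have herase : univ \ insert S' P = (univ \ P).erase S' := by
      ext a
      simp [Finset.mem_sdiff, Finset.mem_insert, Finset.mem_erase, and_comm,
        not_or, and_assoc]
    rw [hw, herase, hr, hc, hsplit]
    have hne : pneg (x S') ≠ 0 := (hneg S').ne'
    field_simp
  rw [key S hS, Finset.sum_congr rfl key, ← Finset.sum_mul,
    mul_div_mul_right _ _ hcpos.ne']
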